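/- Let H ∈ M_{n×m}(ℝ) have linearly independent columns, x ∈ ℤ^m, y ∈ ℝ^n, w = y − Hx. Let h′_1, …, h′_m be an LLL-reduced basis of L(H) with parameter δ ∈ (1/4, 1), α = 1/(δ − 1/4), and set t = ε a(H′) where 0 < ε ≤ 1/(2√2 · α^{m − 1/2}); suppose ‖w‖ ≤ ε d_H. If b̃_1, …, b̃_{m+1} is any LLL-reduced basis (parameter δ) of L(H̃), with b̃_j = H̃ ũ_j for a unimodular matrix Ũ ∈ M_{(m+1)×(m+1)}(ℤ), then b̃_1 = ±(Hx − y, t), and the first column of Ũ equals ±(x, 1); in particular, augmented lattice reduction correctly recovers x. -/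

import Mathlib

open scoped BigOperators

/-- Gram-Schmidt orthogonalization of the system of vectors `h`. -/
noncomputable def gso {n m : ℕ} (h : Fin m → EuclideanSpace ℝ (Fin n)) :
    Fin m → EuclideanSpace ℝ (Fin n) :=
  @InnerProductSpace.gramSchmidt ℝ (EuclideanSpace ℝ (Fin n)) _ _ _ (Fin m) _ _
    (inferInstance : WellFoundedLT (Fin m)) h

/-- Gram-Schmidt coefficients `μ i j = ⟨h i, h* j⟩ / ‖h* j‖²`. -/
noncomputable def mu {n m : ℕ} (h : Fin m → EuclideanSpace ℝ (Fin n)) (i j : Fin m) : ℝ :=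
  (inner ℝ (h i) (gso h j) : ℝ) / ‖gso h j‖ ^ 2

/-- The lattice generated by the vectors `h`. -/
def latticePts {n m : ℕ} (h : Fin m → EuclideanSpace ℝ (Fin n)) :
    Set (EuclideanSpace ℝ (Fin n)) :=
  {v | ∃ x : Fin m → ℤ, v = ∑ i, (x i : ℝ) • h i}

/-- `a(H)`: the minimum norm of the Gram-Schmidt vectors. -/
noncomputable def aMin {n m : ℕ} (h : Fin m → EuclideanSpace ℝ (Fin n)) : ℝ :=
  ⨅ i, ‖gso h i‖

/-- `A(H)`: the maximum norm of the Gram-Schmidt vectors. -/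
noncomputable def AMax {n m : ℕ} (h : Fin m → EuclideanSpace ℝ (Fin n)) : ℝ :=
  ⨆ i, ‖gso h i‖

/-- LLL-reducedness (size reduction + Lovász condition) with parameter `δ`. -/
def IsLLLReduced {n m : ℕ} (δ : ℝ) (h : Fin m → EuclideanSpace ℝ (Fin n)) : Prop :=
  (∀ k l : Fin m, l < k → |mu h k l| ≤ 1 / 2) ∧
  (∀ k l : Fin m, (l : ℕ) + 1 = (k : ℕ) →
    δ * ‖gso h l‖ ^ 2 ≤ ‖gso h k + mu h k l • gso h l‖ ^ 2)

/-- Append the coordinate `c` to the vector `v`. -/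
noncomputable def aug {n : ℕ} (v : EuclideanSpace ℝ (Fin n)) (c : ℝ) :
    EuclideanSpace ℝ (Fin (n + 1)) :=
  (WithLp.equiv 2 (Fin (n + 1) → ℝ)).symm (Fin.snoc ((WithLp.equiv 2 (Fin n → ℝ)) v) c)

/-- Columns of the augmented matrix `H̃`: the columns `(h i, 0)` followed by `(-y, t)`. -/
noncomputable def augCols {n m : ℕ} (h : Fin m → EuclideanSpace ℝ (Fin n))
    (y : EuclideanSpace ℝ (Fin n)) (t : ℝ) : Fin (m + 1) → EuclideanSpace ℝ (Fin (n + 1)) :=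
  Fin.snoc (fun i => aug (h i) 0) (aug (-y) t)

/-- `v` is a `γ`-unique shortest vector of the lattice `L`. -/
def IsUniqueShortest {N : ℕ} (L : Set (EuclideanSpace ℝ (Fin N))) (γ : ℝ)
    (v : EuclideanSpace ℝ (Fin N)) : Prop :=
  v ∈ L ∧ v ≠ 0 ∧ (∀ u ∈ L, u ≠ 0 → ‖v‖ ≤ ‖u‖) ∧
    ∀ u ∈ L, ‖u‖ ≤ γ * ‖v‖ → ¬ LinearIndependent ℝ ![u, v]

/-!
The vector `w̃ = (Hx - y, t)` lies in `L(H̃)` and `‖w̃‖² ≤ 2ε²d_H²`. As `b̃₁` heads an LLL-reduced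
basis, `‖b̃₁‖² ≤ α^m ‖w̃‖²`; together with `d_H² ≤ α^(m-1) a(H')²` the choice of `ε` gives
`‖b̃₁‖ ≤ a(H')/2`. A vector `(Hz - qy, qt)` of `L(H̃)` that short has `z = qx`: otherwise either
`|q|ε > 1/2` and its last coordinate alone is too long, or `Hz - qy = H(z - qx) - q(y - Hx)` has
norm at least `(1 - |q|ε) d_H`. Hence the first column of `Ũ` is `q (x, 1)`, so `q ∣ det Ũ = ±1`.
-/

open InnerProductSpace

section GramSchmidt

variable {n m : ℕ}

lemma gso_eq_gramSchmidt (h : Fin m → EuclideanSpace ℝ (Fin n)) :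
    gso h = gramSchmidt ℝ h := rfl

lemma gso_zero [NeZero m] (h : Fin m → EuclideanSpace ℝ (Fin n)) : gso h 0 = h 0 := by
  rw [gso_eq_gramSchmidt, gramSchmidt_def, ← bot_eq_zero, Finset.Iio_bot, Finset.sum_empty,
    sub_zero]

lemma inner_gso_self (h : Fin m → EuclideanSpace ℝ (Fin n)) (j : Fin m) :
    ⟪gso h j, h j⟫_ℝ = ‖gso h j‖ ^ 2 := by
  rw [gso_eq_gramSchmidt]
  conv_lhs => rw [gramSchmidt_def'' ℝ h j]
  rw [inner_add_right, inner_sum, real_inner_self_eq_norm_sq, add_eq_left]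
  refine Finset.sum_eq_zero fun k hk => ?_
  rw [inner_smul_right, gramSchmidt_orthogonal ℝ h (Finset.mem_Iio.mp hk).ne', mul_zero]

lemma inner_gso_sum_smul (h : Fin m → EuclideanSpace ℝ (Fin n)) (c : Fin m → ℝ) {j : Fin m}
    (hc : ∀ i, j < i → c i = 0) :
    ⟪gso h j, ∑ i, c i • h i⟫_ℝ = c j * ‖gso h j‖ ^ 2 := by
  rw [inner_sum, Finset.sum_eq_single j, inner_smul_right, inner_gso_self]
  · intro i _ hij
    rcases hij.lt_or_gt with hlt | hgt
    · rw [inner_smul_right, gso_eq_gramSchmidt, gramSchmidt_inv_triangular ℝ h hlt, mul_zero]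
    · rw [hc i hgt, zero_smul, inner_zero_right]
  · simp

lemma norm_gso_le_norm_sum_smul (h : Fin m → EuclideanSpace ℝ (Fin n)) (c : Fin m → ℝ)
    {j : Fin m} (hcj : 1 ≤ |c j|) (hc : ∀ i, j < i → c i = 0) :
    ‖gso h j‖ ≤ ‖∑ i, c i • h i‖ := by
  have key : ‖gso h j‖ ^ 2 ≤ ‖gso h j‖ * ‖∑ i, c i • h i‖ :=
    calc ‖gso h j‖ ^ 2 ≤ |c j| * ‖gso h j‖ ^ 2 := le_mul_of_one_le_left (by positivity) hcj
      _ = |⟪gso h j, ∑ i, c i • h i⟫_ℝ| := by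
        rw [inner_gso_sum_smul h c hc, abs_mul, abs_of_nonneg (sq_nonneg ‖gso h j‖)]
      _ ≤ ‖gso h j‖ * ‖∑ i, c i • h i‖ := abs_real_inner_le_norm _ _
  rcases (norm_nonneg (gso h j)).eq_or_lt with h0 | h0
  · exact h0 ▸ norm_nonneg _
  · exact le_of_mul_le_mul_left (by rwa [sq] at key) h0

lemma exists_norm_gso_le_norm_sum_smul (h : Fin m → EuclideanSpace ℝ (Fin n)) {c : Fin m → ℤ}
    (hc : c ≠ 0) : ∃ j, ‖gso h j‖ ≤ ‖∑ i, (c i : ℝ) • h i‖ := by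
  classical
  have hs : (Finset.univ.filter (c · ≠ 0)).Nonempty := by
    obtain ⟨i, hi⟩ := Function.ne_iff.mp hc
    exact ⟨i, by simpa using hi⟩
  set j := (Finset.univ.filter (c · ≠ 0)).max' hs
  have hj : c j ≠ 0 := by simpa using Finset.max'_mem _ hs
  refine ⟨j, norm_gso_le_norm_sum_smul h _ ?_ fun i hi => ?_⟩
  · exact_mod_cast Int.one_le_abs hj
  · by_contra hci
    exact (Finset.le_max' _ i (by simpa using hci)).not_gt hi

lemma aMin_le_norm_sum_smul (h : Fin m → EuclideanSpace ℝ (Fin n)) {c : Fin m → ℤ}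
    (hc : c ≠ 0) : aMin h ≤ ‖∑ i, (c i : ℝ) • h i‖ := by
  obtain ⟨j, hj⟩ := exists_norm_gso_le_norm_sum_smul h hc
  exact (ciInf_le (Set.finite_range _).bddBelow j).trans hj

lemma exists_norm_gso_eq_aMin [NeZero m] (h : Fin m → EuclideanSpace ℝ (Fin n)) :
    ∃ i, ‖gso h i‖ = aMin h :=
  exists_eq_ciInf_of_finite

lemma aMin_pos [NeZero m] {h : Fin m → EuclideanSpace ℝ (Fin n)} (hli : LinearIndependent ℝ h) :
    0 < aMin h := by
  obtain ⟨i, hi⟩ := exists_norm_gso_eq_aMin h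
  exact hi ▸ norm_pos_iff.mpr (gramSchmidt_ne_zero i hli)

end GramSchmidt

namespace IsLLLReduced

variable {n m : ℕ} {δ : ℝ} {h : Fin m → EuclideanSpace ℝ (Fin n)}

lemma norm_gso_sq_le_of_succ_eq (hδ : 1 / 4 < δ) (hred : IsLLLReduced δ h) {l k : Fin m}
    (hlk : (l : ℕ) + 1 = k) : ‖gso h l‖ ^ 2 ≤ 1 / (δ - 1 / 4) * ‖gso h k‖ ^ 2 := by
  have hlt : l < k := by rw [Fin.lt_def]; omega
  have hmu : mu h k l ^ 2 ≤ 1 / 4 := by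
    have := hred.1 k l hlt
    rw [← sq_abs]; nlinarith [abs_nonneg (mu h k l)]
  have hlov : δ * ‖gso h l‖ ^ 2 ≤ ‖gso h k‖ ^ 2 + mu h k l ^ 2 * ‖gso h l‖ ^ 2 := by
    have := hred.2 k l hlk
    rwa [norm_add_sq_real, real_inner_smul_right, gso_eq_gramSchmidt,
      gramSchmidt_orthogonal ℝ h hlt.ne', mul_zero, mul_zero, add_zero, norm_smul, mul_pow,
      Real.norm_eq_abs, sq_abs] at this
  rw [one_div, ← div_eq_inv_mul, le_div_iff₀ (by linarith)]
  nlinarith [sq_nonneg ‖gso h l‖]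

lemma norm_gso_zero_sq_le [NeZero m] (hδ : 1 / 4 < δ) (hred : IsLLLReduced δ h) (j : Fin m) :
    ‖gso h 0‖ ^ 2 ≤ (1 / (δ - 1 / 4)) ^ (j : ℕ) * ‖gso h j‖ ^ 2 := by
  obtain ⟨j, hj⟩ := j
  induction j with
  | zero => simp
  | succ k ih =>
    calc ‖gso h 0‖ ^ 2 ≤ (1 / (δ - 1 / 4)) ^ k * ‖gso h ⟨k, by omega⟩‖ ^ 2 := ih _
      _ ≤ (1 / (δ - 1 / 4)) ^ k * (1 / (δ - 1 / 4) * ‖gso h ⟨k + 1, hj⟩‖ ^ 2) :=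
        mul_le_mul_of_nonneg_left (hred.norm_gso_sq_le_of_succ_eq hδ rfl)
          (pow_nonneg (one_div_pos.mpr (by linarith)).le k)
      _ = (1 / (δ - 1 / 4)) ^ (k + 1) * ‖gso h ⟨k + 1, hj⟩‖ ^ 2 := by ring

lemma norm_zero_sq_le [NeZero m] (hδ : δ ∈ Set.Ioo (1 / 4) 1) (hred : IsLLLReduced δ h)
    (j : Fin m) :
    ‖h 0‖ ^ 2 ≤ (1 / (δ - 1 / 4)) ^ (m - 1) * ‖gso h j‖ ^ 2 := by
  have hα : 1 ≤ 1 / (δ - 1 / 4) := by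
    rw [le_div_iff₀ (by linarith [hδ.1])]; linarith [hδ.2]
  rw [← gso_zero h]
  exact (hred.norm_gso_zero_sq_le hδ.1 j).trans
    (by gcongr; exact Nat.le_sub_one_of_lt j.2)

lemma norm_zero_sq_le_norm_sum_smul_sq [NeZero m] (hδ : δ ∈ Set.Ioo (1 / 4) 1)
    (hred : IsLLLReduced δ h) {c : Fin m → ℤ} (hc : c ≠ 0) :
    ‖h 0‖ ^ 2 ≤ (1 / (δ - 1 / 4)) ^ (m - 1) * ‖∑ i, (c i : ℝ) • h i‖ ^ 2 := by
  obtain ⟨j, hj⟩ := exists_norm_gso_le_norm_sum_smul h hc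
  exact (hred.norm_zero_sq_le hδ j).trans
    (by gcongr; exact pow_nonneg (one_div_pos.mpr (by linarith [hδ.1])).le _)

lemma norm_zero_sq_le_aMin_sq [NeZero m] (hδ : δ ∈ Set.Ioo (1 / 4) 1)
    (hred : IsLLLReduced δ h) :
    ‖h 0‖ ^ 2 ≤ (1 / (δ - 1 / 4)) ^ (m - 1) * aMin h ^ 2 := by
  obtain ⟨j, hj⟩ := exists_norm_gso_eq_aMin h
  exact hj ▸ hred.norm_zero_sq_le hδ j

end IsLLLReduced

section Lattice

variable {n m : ℕ} {h : Fin m → EuclideanSpace ℝ (Fin n)} {dH : ℝ}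

lemma self_mem_latticePts (h : Fin m → EuclideanSpace ℝ (Fin n)) (i : Fin m) :
    h i ∈ latticePts h :=
  ⟨Pi.single i 1, by simp [Pi.single_apply]⟩

lemma pos_of_isLeast_norm (hdH : IsLeast {r : ℝ | ∃ v ∈ latticePts h, v ≠ 0 ∧ ‖v‖ = r} dH) :
    0 < dH := by
  obtain ⟨v, -, hv, rfl⟩ := hdH.1
  exact norm_pos_iff.mpr hv

lemma le_norm_sum_smul_of_isLeast (hli : LinearIndependent ℝ h)
    (hdH : IsLeast {r : ℝ | ∃ v ∈ latticePts h, v ≠ 0 ∧ ‖v‖ = r} dH) {c : Fin m → ℤ}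
    (hc : c ≠ 0) : dH ≤ ‖∑ i, (c i : ℝ) • h i‖ := by
  refine hdH.2 ⟨_, ⟨c, rfl⟩, fun h0 => hc (funext fun i => ?_), rfl⟩
  exact_mod_cast Fintype.linearIndependent_iff.mp hli _ h0 i

lemma aMin_le_of_isLeast {h' : Fin m → EuclideanSpace ℝ (Fin n)}
    (hsame : latticePts h' = latticePts h)
    (hdH : IsLeast {r : ℝ | ∃ v ∈ latticePts h, v ≠ 0 ∧ ‖v‖ = r} dH) : aMin h' ≤ dH := by
  obtain ⟨v, hv, hv0, rfl⟩ := hdH.1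
  rw [← hsame] at hv
  obtain ⟨c, rfl⟩ := hv
  exact aMin_le_norm_sum_smul h' fun hc => hv0 (by simp [hc])

lemma sq_le_pow_mul_aMin_sq_of_isLeast [NeZero m] {δ : ℝ} (hδ : δ ∈ Set.Ioo (1 / 4) 1)
    {h' : Fin m → EuclideanSpace ℝ (Fin n)} (hli' : LinearIndependent ℝ h')
    (hred : IsLLLReduced δ h') (hsame : latticePts h' = latticePts h)
    (hdH : IsLeast {r : ℝ | ∃ v ∈ latticePts h, v ≠ 0 ∧ ‖v‖ = r} dH) :
    dH ^ 2 ≤ (1 / (δ - 1 / 4)) ^ (m - 1) * aMin h' ^ 2 := by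
  have hle : dH ≤ ‖h' 0‖ :=
    hdH.2 ⟨h' 0, hsame ▸ self_mem_latticePts h' 0, hli'.ne_zero 0, rfl⟩
  exact (pow_le_pow_left₀ (pos_of_isLeast_norm hdH).le hle 2).trans
    (hred.norm_zero_sq_le_aMin_sq hδ)

end Lattice

lemma sum_smul_eq_sum_mulVec_smul {ι E : Type*} [Fintype ι] [AddCommGroup E] [Module ℝ E]
    (U : Matrix ι ι ℤ) {v b : ι → E} (hb : ∀ j, b j = ∑ i, (U i j : ℝ) • v i) (c : ι → ℤ) :
    ∑ j, (c j : ℝ) • b j = ∑ i, (U.mulVec c i : ℝ) • v i := by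
  simp only [hb, Finset.smul_sum, smul_smul, Matrix.mulVec, dotProduct, Int.cast_sum,
    Int.cast_mul, Finset.sum_smul]
  rw [Finset.sum_comm]
  simp only [mul_comm]

lemma exists_sum_smul_eq_of_isUnit_det {ι E : Type*} [Fintype ι] [DecidableEq ι]
    [AddCommGroup E] [Module ℝ E] {U : Matrix ι ι ℤ} (hU : IsUnit U.det) {v b : ι → E}
    (hb : ∀ j, b j = ∑ i, (U i j : ℝ) • v i) {c : ι → ℤ} (hc : c ≠ 0) :
    ∃ c' : ι → ℤ, c' ≠ 0 ∧ ∑ j, (c' j : ℝ) • b j = ∑ i, (c i : ℝ) • v i := by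
  have hUc : U.mulVec (U⁻¹.mulVec c) = c := by
    rw [Matrix.mulVec_mulVec, Matrix.mul_nonsing_inv U hU, Matrix.one_mulVec]
  refine ⟨U⁻¹.mulVec c, fun h0 => hc ?_, ?_⟩
  · rw [← hUc, h0, Matrix.mulVec_zero]
  · rw [sum_smul_eq_sum_mulVec_smul U hb, hUc]

lemma dvd_det_of_col_eq_smul {ι : Type*} [Fintype ι] [DecidableEq ι] {U : Matrix ι ι ℤ}
    {j : ι} {q : ℤ} {c : ι → ℤ} (hcol : (fun i => U i j) = q • c) : q ∣ U.det := by
  have h := Matrix.det_updateCol_smul U j q c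
  rw [← hcol, Matrix.updateCol_eq_self] at h
  exact ⟨_, h⟩

section Augmented

variable {n m : ℕ}

lemma aug_apply_castSucc (v : EuclideanSpace ℝ (Fin n)) (c : ℝ) (i : Fin n) :
    aug v c (Fin.castSucc i) = v i := by
  simp [aug]

lemma aug_apply_last (v : EuclideanSpace ℝ (Fin n)) (c : ℝ) : aug v c (Fin.last n) = c := by
  simp [aug]

lemma norm_aug_sq (v : EuclideanSpace ℝ (Fin n)) (c : ℝ) :
    ‖aug v c‖ ^ 2 = ‖v‖ ^ 2 + c ^ 2 := by
  simp [EuclideanSpace.norm_sq_eq, Fin.sum_univ_castSucc, aug_apply_castSucc, aug_apply_last]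

lemma sum_smul_augCols (h : Fin m → EuclideanSpace ℝ (Fin n)) (y : EuclideanSpace ℝ (Fin n))
    (t : ℝ) (r : Fin (m + 1) → ℝ) :
    ∑ i, r i • augCols h y t i
      = aug (∑ i, r (Fin.castSucc i) • h i - r (Fin.last m) • y) (r (Fin.last m) * t) := by
  ext k
  refine Fin.lastCases ?_ (fun k => ?_) k
  · simp [Fin.sum_univ_castSucc, augCols, aug_apply_last]
  · simp [Fin.sum_univ_castSucc, augCols, aug_apply_castSucc, Finset.sum_apply]
    ring

lemma sum_snoc_smul_augCols (h : Fin m → EuclideanSpace ℝ (Fin n))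
    (y : EuclideanSpace ℝ (Fin n)) (t : ℝ) (x : Fin m → ℤ) :
    ∑ i, ((Fin.snoc x 1 : Fin (m + 1) → ℤ) i : ℝ) • augCols h y t i
      = aug (∑ i, (x i : ℝ) • h i - y) t := by
  simp [sum_smul_augCols]

end Augmented

lemma norm_aug_sq_le {n m : ℕ} {h : Fin m → EuclideanSpace ℝ (Fin n)} {x : Fin m → ℤ}
    {y : EuclideanSpace ℝ (Fin n)} {ε a dH : ℝ} (hε : 0 ≤ ε) (ha : 0 ≤ a) (had : a ≤ dH)
    (hw : ‖y - ∑ i, (x i : ℝ) • h i‖ ≤ ε * dH) :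
    ‖aug (∑ i, (x i : ℝ) • h i - y) (ε * a)‖ ^ 2 ≤ 2 * ε ^ 2 * dH ^ 2 := by
  have hεa : ε * a ≤ ε * dH := mul_le_mul_of_nonneg_left had hε
  rw [norm_aug_sq, norm_sub_rev]
  nlinarith [pow_le_pow_left₀ (norm_nonneg _) hw 2,
    pow_le_pow_left₀ (mul_nonneg hε ha) hεa 2]

lemma eq_smul_snoc_of_norm_sq_le {n m : ℕ} {h : Fin m → EuclideanSpace ℝ (Fin n)}
    (hli : LinearIndependent ℝ h) {dH : ℝ}
    (hdH : IsLeast {r : ℝ | ∃ v ∈ latticePts h, v ≠ 0 ∧ ‖v‖ = r} dH)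
    {x : Fin m → ℤ} {y : EuclideanSpace ℝ (Fin n)} {ε a : ℝ} (ha : 0 < a) (had : a ≤ dH)
    (hw : ‖y - ∑ i, (x i : ℝ) • h i‖ ≤ ε * dH) {r : Fin (m + 1) → ℤ}
    (hr : ‖∑ i, (r i : ℝ) • augCols h y (ε * a) i‖ ^ 2 ≤ a ^ 2 / 4) :
    r = r (Fin.last m) • Fin.snoc x 1 := by
  set q := r (Fin.last m)
  set z : Fin m → ℤ := fun i => r (Fin.castSucc i)
  suffices hz : z = q • x by
    ext i
    refine Fin.lastCases ?_ (fun i => ?_) i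
    · simp [q]
    · simpa using congrFun hz i
  by_contra hzx
  set F := ‖∑ i, (z i : ℝ) • h i - (q : ℝ) • y‖
  set s := |(q : ℝ)| * ε
  have hnorm : F ^ 2 + s ^ 2 * a ^ 2 ≤ a ^ 2 / 4 := by
    have : s ^ 2 * a ^ 2 = ((q : ℝ) * (ε * a)) ^ 2 := by
      rw [mul_pow, sq_abs]; ring
    rw [this]
    simpa [sum_smul_augCols, norm_aug_sq] using hr
  have hfar : dH * (1 - s) ≤ F := by
    have hdecomp : ∑ i, (z i : ℝ) • h i - (q : ℝ) • y
        = ∑ i, ((z - q • x) i : ℝ) • h i - (q : ℝ) • (y - ∑ i, (x i : ℝ) • h i) := by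
      simp only [Pi.sub_apply, Pi.smul_apply, smul_eq_mul, Int.cast_sub, Int.cast_mul, sub_smul,
        mul_smul, Finset.sum_sub_distrib, smul_sub, Finset.smul_sum]
      abel
    have hlat := le_norm_sum_smul_of_isLeast hli hdH (sub_ne_zero.mpr hzx)
    have hqw : ‖(q : ℝ) • (y - ∑ i, (x i : ℝ) • h i)‖ ≤ |(q : ℝ)| * (ε * dH) := by
      rw [norm_smul, Real.norm_eq_abs]
      exact mul_le_mul_of_nonneg_left hw (abs_nonneg _)
    have := norm_sub_norm_le (∑ i, ((z - q • x) i : ℝ) • h i)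
      ((q : ℝ) • (y - ∑ i, (x i : ℝ) • h i))
    rw [← hdecomp] at this
    linarith
  by_cases hs : s ≤ 1 / 2
  · have hF : a * (1 - s) ≤ F :=
      (mul_le_mul_of_nonneg_right had (by linarith)).trans hfar
    nlinarith [mul_le_mul hF hF (by nlinarith) (norm_nonneg _), sq_nonneg (s - 1 / 2)]
  · have hs2 : 1 / 4 < s ^ 2 := by nlinarith
    nlinarith [mul_lt_mul_of_pos_right hs2 (pow_pos ha 2), sq_nonneg F]

lemma eight_mul_sq_mul_pow_le_one {α ε : ℝ} {m : ℕ} (hα : 0 < α) (hm : 0 < m) (hε0 : 0 < ε)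
    (hε : ε ≤ 1 / (2 * Real.sqrt 2 * α ^ ((m : ℝ) - 1 / 2))) :
    8 * ε ^ 2 * α ^ (2 * m - 1) ≤ 1 := by
  have hR : (α ^ ((m : ℝ) - 1 / 2)) ^ 2 = α ^ (2 * m - 1) := by
    rw [← Real.rpow_natCast, ← Real.rpow_mul hα.le, ← Real.rpow_natCast]
    push_cast [Nat.cast_sub (by omega : 1 ≤ 2 * m)]
    ring_nf
  have hD : 0 < 2 * Real.sqrt 2 * α ^ ((m : ℝ) - 1 / 2) := by positivity
  have h1 : ε * (2 * Real.sqrt 2 * α ^ ((m : ℝ) - 1 / 2)) ≤ 1 := by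
    rwa [le_div_iff₀ hD] at hε
  have h2 : (ε * (2 * Real.sqrt 2 * α ^ ((m : ℝ) - 1 / 2))) ^ 2 ≤ 1 := by
    nlinarith [mul_pos hε0 hD]
  rwa [mul_pow, mul_pow, mul_pow, Real.sq_sqrt (by norm_num), hR, show (2 : ℝ) ^ 2 * 2 = 8 by
    norm_num, ← mul_assoc, mul_comm (ε ^ 2)] at h2

lemma pow_mul_two_mul_sq_le {α ε d a : ℝ} {m : ℕ} (hm : 0 < m) (hα : 1 ≤ α)
    (hd : d ^ 2 ≤ α ^ (m - 1) * a ^ 2) (hε : 8 * ε ^ 2 * α ^ (2 * m - 1) ≤ 1) :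
    α ^ m * (2 * ε ^ 2 * d ^ 2) ≤ a ^ 2 / 4 := by
  have hpow : α ^ m * α ^ (m - 1) = α ^ (2 * m - 1) := by
    rw [← pow_add]; congr 1; omega
  have hαm : 0 ≤ α ^ m := pow_nonneg (by linarith) m
  calc α ^ m * (2 * ε ^ 2 * d ^ 2) ≤ α ^ m * (2 * ε ^ 2 * (α ^ (m - 1) * a ^ 2)) := by gcongr
    _ = 2 * ε ^ 2 * α ^ (2 * m - 1) * a ^ 2 := by rw [← hpow]; ring
    _ ≤ a ^ 2 / 4 := by nlinarith [sq_nonneg a]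

/-- under the hypotheses of Lemma 3.2, any LLL-reduced basis `b` of the
augmented lattice `L(H̃)`, with change of basis matrix `U` unimodular, has
`b_1 = ±(Hx - y, t)` and first column of `U` equal to `±(x, 1)`: augmented lattice
reduction correctly recovers `x`. -/
theorem statement8 {n m : ℕ} (hm : 0 < m)
    (h : Fin m → EuclideanSpace ℝ (Fin n)) (hli : LinearIndependent ℝ h)
    (x : Fin m → ℤ) (y : EuclideanSpace ℝ (Fin n))
    (h' : Fin m → EuclideanSpace ℝ (Fin n)) (hli' : LinearIndependent ℝ h')
    (hsame : latticePts h' = latticePts h)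
    (δ : ℝ) (hδ : δ ∈ Set.Ioo (1/4 : ℝ) 1)
    (hred : IsLLLReduced δ h')
    (α : ℝ) (hα : α = 1 / (δ - 1/4))
    (dH : ℝ) (hdH : IsLeast {r : ℝ | ∃ v ∈ latticePts h, v ≠ 0 ∧ ‖v‖ = r} dH)
    (ε t : ℝ) (hε0 : 0 < ε) (hε : ε ≤ 1 / (2 * Real.sqrt 2 * α ^ ((m : ℝ) - 1/2)))
    (ht : t = ε * aMin h')
    (hw : ‖y - ∑ i, (x i : ℝ) • h i‖ ≤ ε * dH)
    (U : Matrix (Fin (m + 1)) (Fin (m + 1)) ℤ) (hU : U.det = 1 ∨ U.det = -1)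
    (b : Fin (m + 1) → EuclideanSpace ℝ (Fin (n + 1)))
    (hb : ∀ j, b j = ∑ i, (U i j : ℝ) • augCols h y t i)
    (hbred : IsLLLReduced δ b) :
    (b 0 = aug ((∑ i, (x i : ℝ) • h i) - y) t ∨
        b 0 = -aug ((∑ i, (x i : ℝ) • h i) - y) t) ∧
      ((fun i => U i 0) = Fin.snoc x 1 ∨ (fun i => U i 0) = -Fin.snoc x 1) := by
  have : NeZero m := ⟨hm.ne'⟩
  have hα1 : 1 ≤ α := by
    rw [hα, le_div_iff₀ (by linarith [hδ.1])]; linarith [hδ.2]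
  have ha : 0 < aMin h' := aMin_pos hli'
  have had : aMin h' ≤ dH := aMin_le_of_isLeast hsame hdH
  have hUdet : IsUnit U.det := by rcases hU with hU | hU <;> simp [hU]
  obtain ⟨c, hc0, hc⟩ := exists_sum_smul_eq_of_isUnit_det hUdet hb
    (c := Fin.snoc x 1) (v := augCols h y t) fun h0 => by simpa using congrFun h0 (Fin.last m)
  rw [sum_snoc_smul_augCols] at hc
  have hshort : ‖b 0‖ ^ 2 ≤ aMin h' ^ 2 / 4 :=
    calc ‖b 0‖ ^ 2 ≤ α ^ m * ‖aug (∑ i, (x i : ℝ) • h i - y) t‖ ^ 2 := by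
          simpa [hα, hc] using hbred.norm_zero_sq_le_norm_sum_smul_sq hδ hc0
      _ ≤ α ^ m * (2 * ε ^ 2 * dH ^ 2) := by
          gcongr; exact ht ▸ norm_aug_sq_le hε0.le ha.le had hw
      _ ≤ aMin h' ^ 2 / 4 := pow_mul_two_mul_sq_le hm hα1
          (hα ▸ sq_le_pow_mul_aMin_sq_of_isLeast hδ hli' hred hsame hdH)
          (eight_mul_sq_mul_pow_le_one (by linarith) hm hε0 hε)
  have hcol : (fun i => U i 0) = U (Fin.last m) 0 • Fin.snoc x 1 :=
    eq_smul_snoc_of_norm_sq_le hli hdH ha had hw (by rwa [← ht, ← hb 0])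
  have hq : U (Fin.last m) 0 = 1 ∨ U (Fin.last m) 0 = -1 :=
    Int.isUnit_iff.mp (isUnit_of_dvd_unit (dvd_det_of_col_eq_smul hcol) hUdet)
  have hb0 : b 0 = (U (Fin.last m) 0 : ℝ) • aug (∑ i, (x i : ℝ) • h i - y) t := by
    rw [hb 0, ← sum_snoc_smul_augCols h y t x, Finset.smul_sum]
    refine Finset.sum_congr rfl fun i _ => ?_
    rw [smul_smul, congrFun hcol i, Pi.smul_apply, smul_eq_mul, Int.cast_mul]
  rcases hq with hq | hq <;> simp [hb0, hcol, hq]
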